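/- arXiv:2511.00679 — 2 statements merged into one kernel-verified Lean document; each statement's English description precedes it below -/
import Mathlib

section
/- For all real x, E_{1/2,1}(x) = (2/\sqrt{\pi}) \int_0^\infty e^{-w^2 + 2xw} dw, i.e., the Mittag-Leffler function of order 1/2 admits this Gaussian integral representation. -/
open Real
open scoped Nat
set_option maxHeartbeats 1000000

/-- The Mittag-Leffler function `E_{1/2,1}`. -/
noncomputable def mlHalf (x : ℝ) : ℝ := ∑' k : ℕ, x ^ k / Real.Gamma ((k : ℝ) / 2 + 1)

open MeasureTheory Set in
private lemma gaussian_moment (k : ℕ) :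
    ∫ w in Set.Ioi (0:ℝ), w ^ k * Real.exp (-w ^ 2) = Real.Gamma ((k + 1) / 2) / 2 := by
  have h := integral_rpow_mul_exp_neg_rpow (p := 2) (q := (k : ℝ)) two_pos
    (lt_of_lt_of_le neg_one_lt_zero (Nat.cast_nonneg k))
  rw [show (1:ℝ)/2 * Real.Gamma (((k:ℝ)+1)/2) = Real.Gamma (((k:ℝ)+1)/2) / 2 by ring] at h
  rw [← h]
  refine setIntegral_congr_fun measurableSet_Ioi (fun w hw => ?_)
  rw [← Real.rpow_natCast w k]
  norm_num

private lemma gaussian_moment_integrable (k : ℕ) :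
    MeasureTheory.IntegrableOn (fun w : ℝ => w ^ k * Real.exp (-w ^ 2)) (Set.Ioi 0) := by
  have h := integrableOn_rpow_mul_exp_neg_rpow (p := 2) (s := (k : ℝ))
    (lt_of_lt_of_le neg_one_lt_zero (Nat.cast_nonneg k)) two_pos
  refine h.congr_fun (fun w hw => ?_) measurableSet_Ioi
  beta_reduce
  rw [Real.rpow_natCast w k]
  norm_num

private lemma dup (k : ℕ) :
    Real.Gamma ((k + 1) / 2) * Real.Gamma ((k : ℝ) / 2 + 1) =
      Real.sqrt π * (k ! : ℝ) / 2 ^ k := by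
  have h := Real.Gamma_mul_Gamma_add_half (((k:ℝ) + 1) / 2)
  have h1 : ((k:ℝ) + 1) / 2 + 1 / 2 = (k : ℝ) / 2 + 1 := by ring
  have h2 : 2 * (((k:ℝ) + 1) / 2) = (k : ℝ) + 1 := by ring
  rw [h1, h2, Real.Gamma_nat_eq_factorial] at h
  rw [h]
  rw [show (1:ℝ) - ((k:ℝ) + 1) = -(k:ℝ) by ring, Real.rpow_neg (by norm_num),
    Real.rpow_natCast]
  ring

private lemma gamma_half_pos (k : ℕ) : 0 < Real.Gamma ((k : ℝ) / 2 + 1) :=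
  Real.Gamma_pos_of_pos (by positivity)

private lemma gamma_fact_le (m : ℕ) :
    Real.Gamma (3/2) * (m ! : ℝ) ≤ Real.Gamma ((m : ℝ) + 3/2) := by
  induction m with
  | zero => simp
  | succ n ih =>
    have hne : (n : ℝ) + 3/2 ≠ 0 := by positivity
    have h : ((n : ℝ) + 1) + 3/2 = ((n : ℝ) + 3/2) + 1 := by ring
    rw [Nat.cast_add, Nat.cast_one, h, Real.Gamma_add_one hne]
    have hpos : 0 < Real.Gamma ((n : ℝ) + 3/2) := Real.Gamma_pos_of_pos (by positivity)
    calc Real.Gamma (3/2) * ((n+1)! : ℝ)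
        = ((n : ℝ) + 1) * (Real.Gamma (3/2) * (n ! : ℝ)) := by
          push_cast [Nat.factorial_succ]; ring
      _ ≤ ((n : ℝ) + 1) * Real.Gamma ((n : ℝ) + 3/2) := by
          apply mul_le_mul_of_nonneg_left ih (by positivity)
      _ ≤ ((n : ℝ) + 3/2) * Real.Gamma ((n : ℝ) + 3/2) := by
          apply mul_le_mul_of_nonneg_right (by linarith) hpos.le

private lemma summable_ml (r : ℝ) :
    Summable (fun k : ℕ => |r| ^ k / Real.Gamma ((k : ℝ) / 2 + 1)) := by
  apply Summable.even_add_odd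
  · have : ∀ m : ℕ, |r| ^ (2 * m) / Real.Gamma (((2*m : ℕ) : ℝ) / 2 + 1)
        = (r ^ 2) ^ m / (m ! : ℝ) := by
      intro m
      have h1 : (((2*m : ℕ) : ℝ)) / 2 + 1 = (m : ℝ) + 1 := by push_cast; ring
      rw [h1, Real.Gamma_nat_eq_factorial, pow_mul, sq_abs]
    exact (Real.summable_pow_div_factorial (r ^ 2)).congr (fun m => (this m).symm)
  · refine Summable.of_nonneg_of_le
      (f := fun m => (|r| / Real.Gamma (3/2)) * ((r ^ 2) ^ m / (m ! : ℝ)))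
      (fun m => div_nonneg (pow_nonneg (abs_nonneg r) _)
        (Real.Gamma_pos_of_pos (by positivity)).le) (fun m => ?_)
      ((Real.summable_pow_div_factorial (r ^ 2)).mul_left _)
    · 
      have h1 : (((2*m+1 : ℕ) : ℝ)) / 2 + 1 = (m : ℝ) + 3/2 := by push_cast; ring
      rw [h1]
      have hG : 0 < Real.Gamma ((m : ℝ) + 3/2) := Real.Gamma_pos_of_pos (by positivity)
      have hG32 : 0 < Real.Gamma (3/2 : ℝ) := Real.Gamma_pos_of_pos (by norm_num)
      have hle := gamma_fact_le m
      rw [div_le_iff₀ hG]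
      have : |r| ^ (2*m+1) = |r| * (r^2)^m := by rw [pow_succ', pow_mul, sq_abs]
      rw [this]
      calc |r| * (r^2)^m = (|r| / Real.Gamma (3/2) * ((r^2)^m / (m ! : ℝ))) *
            (Real.Gamma (3/2) * (m ! : ℝ)) := by
            field_simp
        _ ≤ (|r| / Real.Gamma (3/2) * ((r^2)^m / (m ! : ℝ))) * Real.Gamma ((m:ℝ) + 3/2) := by
            apply mul_le_mul_of_nonneg_left hle (by positivity)

theorem mlHalf_eq_gaussian_integral (x : ℝ) :
    mlHalf x = (2 / Real.sqrt π) * ∫ w in Set.Ioi (0:ℝ), Real.exp (-w ^ 2 + 2 * x * w) := by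
  classical
  have hπ : 0 < Real.sqrt π := Real.sqrt_pos.mpr Real.pi_pos
  set F : ℕ → ℝ → ℝ := fun k w => (2*x) ^ k / (k ! : ℝ) * (w ^ k * Real.exp (-w ^ 2)) with hF
  -- pointwise sum
  have hptsum : ∀ w : ℝ, HasSum (fun k => F k w) (Real.exp (-w ^ 2 + 2 * x * w)) := by
    intro w
    have h := NormedSpace.expSeries_div_hasSum_exp (2 * x * w)
    rw [← Real.exp_eq_exp_ℝ] at h
    have h2 := h.mul_right (Real.exp (-w ^ 2))
    rw [← Real.exp_add] at h2
    have : ∀ k : ℕ, (2*x*w) ^ k / (k ! : ℝ) * Real.exp (-w ^ 2) = F k w := by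
      intro k; rw [hF]; simp only [mul_pow]; ring
    rw [add_comm] at h2
    simpa only [this] using h2
  -- integrability
  have hint : ∀ k : ℕ, MeasureTheory.Integrable (F k)
      (MeasureTheory.volume.restrict (Set.Ioi (0:ℝ))) := fun k =>
    (gaussian_moment_integrable k).const_mul _
  -- value of each integral
  have hval : ∀ k : ℕ, (∫ w in Set.Ioi (0:ℝ), F k w)
      = (2*x) ^ k / (k ! : ℝ) * (Real.Gamma ((k + 1) / 2) / 2) := by
    intro k
    rw [hF]
    rw [MeasureTheory.integral_const_mul, gaussian_moment k]
  -- norm integrals summable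
  have hkey : ∀ k : ℕ, |2*x| ^ k / (k ! : ℝ) * (Real.Gamma (((k:ℝ) + 1) / 2) / 2)
      = Real.sqrt π / 2 * (|x| ^ k / Real.Gamma ((k : ℝ) / 2 + 1)) := by
    intro k
    have hG := gamma_half_pos k
    have hd := dup k
    have hfact : (0:ℝ) < (k ! : ℝ) := by exact_mod_cast Nat.factorial_pos k
    have h2k : (0:ℝ) < 2 ^ k := by positivity
    have habs : |2*x| ^ k = 2 ^ k * |x| ^ k := by
      rw [abs_mul, mul_pow, abs_two]
    rw [habs]
    have hΓ : Real.Gamma (((k:ℝ) + 1) / 2) = Real.sqrt π * (k ! : ℝ) / (2 ^ k * Real.Gamma ((k : ℝ) / 2 + 1)) := by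
      field_simp at hd ⊢
      linarith [hd]
    rw [hΓ]
    field_simp
  have hnorm : ∀ k : ℕ, (∫ w in Set.Ioi (0:ℝ), ‖F k w‖)
      = |2*x| ^ k / (k ! : ℝ) * (Real.Gamma (((k:ℝ) + 1) / 2) / 2) := by
    intro k
    have : ∀ w ∈ Set.Ioi (0:ℝ), ‖F k w‖
        = |2*x| ^ k / (k ! : ℝ) * (w ^ k * Real.exp (-w ^ 2)) := by
      intro w hw
      have hw0 : 0 < w := hw
      simp only [hF, Real.norm_eq_abs, abs_mul, abs_div, abs_pow, Nat.abs_cast,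
        abs_of_pos hw0, abs_of_pos (Real.exp_pos (-w ^ 2))]
    rw [MeasureTheory.setIntegral_congr_fun measurableSet_Ioi this,
      MeasureTheory.integral_const_mul, gaussian_moment k]
  have hsum_norm : Summable (fun k => ∫ w in Set.Ioi (0:ℝ), ‖F k w‖) := by
    simp only [hnorm, hkey]
    exact (summable_ml x).mul_left _
  -- swap
  have hswap := MeasureTheory.integral_tsum_of_summable_integral_norm hint hsum_norm
  have htsum_eq : ∀ w : ℝ, (∑' k, F k w) = Real.exp (-w ^ 2 + 2 * x * w) := fun w =>
    (hptsum w).tsum_eq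
  rw [funext htsum_eq] at hswap
  -- assemble
  rw [mlHalf]
  have hterm : ∀ k : ℕ, x ^ k / Real.Gamma ((k : ℝ) / 2 + 1)
      = (2 / Real.sqrt π) * ∫ w in Set.Ioi (0:ℝ), F k w := by
    intro k
    rw [hval k]
    have hG := gamma_half_pos k
    have hd := dup k
    have hfact : (0:ℝ) < (k ! : ℝ) := by exact_mod_cast Nat.factorial_pos k
    have hΓ : Real.Gamma (((k:ℝ) + 1) / 2) = Real.sqrt π * (k ! : ℝ) / (2 ^ k * Real.Gamma ((k : ℝ) / 2 + 1)) := by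
      field_simp at hd ⊢
      linarith [hd]
    rw [hΓ]
    rw [mul_pow]
    field_simp
  calc (∑' k : ℕ, x ^ k / Real.Gamma ((k : ℝ) / 2 + 1))
      = ∑' k : ℕ, (2 / Real.sqrt π) * ∫ w in Set.Ioi (0:ℝ), F k w := by
        exact tsum_congr hterm
    _ = (2 / Real.sqrt π) * ∑' k : ℕ, ∫ w in Set.Ioi (0:ℝ), F k w := tsum_mul_left
    _ = (2 / Real.sqrt π) * ∫ w in Set.Ioi (0:ℝ), Real.exp (-w ^ 2 + 2 * x * w) := by
        rw [hswap]
end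

section
/- Let \alpha \in (0,1), \lambda > 0, m > 0 with \lambda^2 \neq m, and r_{1,2} = -\lambda \pm \sqrt{\lambda^2-m}. Then for real s > 0 sufficiently large, \int_0^\infty e^{-st} \cdot \frac{1}{2}[(1 + \lambda/\sqrt{\lambda^2-m}) E_{\alpha,1}(r_1 t^\alpha) + (1 - \lambda/\sqrt{\lambda^2-m}) E_{\alpha,1}(r_2 t^\alpha)] dt = (s^{2\alpha-1} + 2\lambda s^{\alpha-1})/(s^{2\alpha} + 2\lambda s^\alpha + m). -/
open Real MeasureTheory


lemma gamma_ratio {α y : ℝ} (hα : 0 < α) (hα1 : α < 1) (hy : 0 < y) :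
    y * Real.Gamma y ≤ Real.Gamma (y + α) * (y + α) ^ (1 - α) := by
  have hpos : 0 < Real.Gamma (y + α) := Real.Gamma_pos_of_pos (by linarith)
  have h := Real.Gamma_mul_add_mul_le_rpow_Gamma_mul_rpow_Gamma (s := y + α) (t := y + α + 1)
    (a := α) (b := 1 - α) (by linarith) (by linarith) hα (by linarith) (by ring)
  rw [show α * (y + α) + (1 - α) * (y + α + 1) = y + 1 by ring] at h
  rw [Real.Gamma_add_one hy.ne'] at h
  rw [Real.Gamma_add_one (by positivity : (y + α) ≠ 0)] at h
  rw [Real.mul_rpow (by positivity) hpos.le] at h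
  have key : Real.Gamma (y+α) ^ α * Real.Gamma (y+α) ^ (1-α) = Real.Gamma (y+α) := by
    rw [← Real.rpow_add hpos, add_sub_cancel, Real.rpow_one]
  nlinarith [Real.rpow_pos_of_pos (show (0:ℝ) < y + α by linarith) (1-α),
    Real.rpow_pos_of_pos hpos α, Real.rpow_pos_of_pos hpos (1-α)]

lemma ml_summable {α : ℝ} (hα : 0 < α) (hα1 : α < 1) {c : ℝ} (hc : 0 ≤ c) :
    Summable fun k : ℕ => c ^ k / Real.Gamma (α * k + 1) := by
  refine summable_of_ratio_norm_eventually_le (r := 1/2) (by norm_num) ?_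
  have hten : Filter.Tendsto (fun k : ℕ => α * k + 1) Filter.atTop Filter.atTop := by
    apply Filter.tendsto_atTop_add_const_right
    exact Filter.Tendsto.const_mul_atTop hα tendsto_natCast_atTop_atTop
  have hev : ∀ᶠ k : ℕ in Filter.atTop, max 1 ((4*c+1) ^ (1/α)) ≤ α * k + 1 :=
    hten.eventually_ge_atTop _
  filter_upwards [hev] with k hk
  set y := α * k + 1 with hy_def
  have hy1 : (1:ℝ) ≤ y := le_trans (le_max_left _ _) hk
  have hy : (0:ℝ) < y := by linarith
  have hGy : 0 < Real.Gamma y := Real.Gamma_pos_of_pos hy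
  have hGya : 0 < Real.Gamma (y + α) := Real.Gamma_pos_of_pos (by linarith)
  have hyα : 4*c + 1 ≤ y ^ α := by
    have h1 : ((4*c+1) ^ (1/α)) ≤ y := le_trans (le_max_right _ _) hk
    calc 4*c+1 = ((4*c+1) ^ (1/α)) ^ α := by
          rw [← Real.rpow_mul (by positivity), one_div, inv_mul_cancel₀ hα.ne', Real.rpow_one]
      _ ≤ y ^ α := Real.rpow_le_rpow (by positivity) h1 hα.le
  have h2y : (y + α) ^ (1-α) ≤ 2 * y ^ (1-α) := by
    calc (y + α) ^ (1-α) ≤ (2*y) ^ (1-α) :=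
          Real.rpow_le_rpow (by linarith) (by linarith) (by linarith)
      _ = 2 ^ (1-α) * y ^ (1-α) := Real.mul_rpow (by norm_num) hy.le
      _ ≤ 2 * y ^ (1-α) := by
          have : (2:ℝ) ^ (1-α) ≤ 2 ^ (1:ℝ) := Real.rpow_le_rpow_of_exponent_le (by norm_num) (by linarith)
          rw [Real.rpow_one] at this
          nlinarith [Real.rpow_pos_of_pos hy (1-α)]
  have hmain : 2 * c * Real.Gamma y ≤ Real.Gamma (y + α) := by
    have h3 := gamma_ratio hα hα1 hy
    have h4 : y * Real.Gamma y ≤ Real.Gamma (y+α) * (2 * y ^ (1-α)) :=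
      le_trans h3 (by nlinarith)
    have h5 : y ^ α * y ^ (1-α) = y := by
      rw [← Real.rpow_add hy, add_sub_cancel, Real.rpow_one]
    have hy1α : 0 < y ^ (1-α) := Real.rpow_pos_of_pos hy _
    nlinarith [mul_pos hGy hy1α]
  have harg : α * (k+1 : ℕ) + 1 = y + α := by push_cast; ring
  rw [harg, pow_succ]
  rw [Real.norm_eq_abs, Real.norm_eq_abs, abs_of_nonneg (by positivity), abs_of_nonneg (by positivity)]
  rw [show (1:ℝ)/2 * (c^k / Real.Gamma y) = c^k / (2 * Real.Gamma y) by ring,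
    div_le_div_iff₀ hGya (by positivity)]
  nlinarith [mul_le_mul_of_nonneg_left hmain (pow_nonneg hc k)]

lemma lap_integrable {p s : ℝ} (hp : 0 ≤ p) (hs : 0 < s) :
    IntegrableOn (fun t => Real.exp (-(s*t)) * t ^ p) (Set.Ioi (0:ℝ)) := by
  have h := Real.GammaIntegral_convergent (show 0 < p+1 by linarith)
  rw [show (0:ℝ) = s * 0 by ring, ← integrableOn_Ioi_comp_mul_left_iff _ _ hs] at h
  have h2 := (h.const_mul ((1/s) ^ p) : IntegrableOn _ _ _)
  refine (IntegrableOn.congr_fun h2 (fun t ht => ?_) measurableSet_Ioi)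
  have ht' : (0:ℝ) < t := by simpa using ht
  have key : (1/s)^p * s^p = 1 := by
    rw [← Real.mul_rpow (by positivity) hs.le, one_div_mul_cancel hs.ne', Real.one_rpow]
  rw [add_sub_cancel_right, Real.mul_rpow hs.le ht'.le]
  linear_combination (Real.exp (-(s*t)) * t ^ p) * key

lemma lap_value {p s : ℝ} (hp : 0 ≤ p) (hs : 0 < s) :
    ∫ t in Set.Ioi (0:ℝ), Real.exp (-(s*t)) * t ^ p = (1/s) ^ (p+1) * Real.Gamma (p+1) := by
  have h := Real.integral_rpow_mul_exp_neg_mul_Ioi (show 0 < p+1 by linarith) hs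
  rw [add_sub_cancel_right] at h
  rw [← h]
  exact setIntegral_congr_fun measurableSet_Ioi (fun t ht => mul_comm _ _)

lemma laplace_ml_gen {α s ρ C : ℝ} (hα : 0 < α) (hs : 0 < s)
    (c : ℕ → ℂ) (hρ : 0 ≤ ρ) (hρs : ρ < s ^ α) (hc : ∀ k, ‖c k‖ ≤ C * ρ ^ k) :
    (∫ t in Set.Ioi (0:ℝ), ∑' k : ℕ, Complex.exp (-(s:ℂ)*t) *
        (c k * ((t ^ (α * k) : ℝ) : ℂ) / ((Real.Gamma (α * k + 1) : ℝ) : ℂ)))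
      = ∑' k : ℕ, c k * (((1/s) ^ (α * k + 1) : ℝ) : ℂ) := by
  have hsα : 0 < s ^ α := Real.rpow_pos_of_pos hs α
  set F : ℕ → ℝ → ℂ := fun k t => Complex.exp (-(s:ℂ)*t) *
      (c k * ((t ^ (α * k) : ℝ) : ℂ) / ((Real.Gamma (α * k + 1) : ℝ) : ℂ)) with hF
  set g : ℕ → ℝ → ℝ := fun k t => Real.exp (-(s*t)) * t ^ (α * k) with hg
  have hΓpos : ∀ k : ℕ, 0 < Real.Gamma (α * k + 1) := fun k =>
    Real.Gamma_pos_of_pos (by positivity)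
  have hFeq : ∀ k, F k = fun t => (c k / ((Real.Gamma (α * k + 1) : ℝ) : ℂ)) * ((g k t : ℝ) : ℂ) := by
    intro k
    funext t
    simp only [hF, hg]
    rw [neg_mul]
    push_cast
    ring
  have hint : ∀ k, Integrable (F k) (volume.restrict (Set.Ioi (0:ℝ))) := by
    intro k
    rw [hFeq k]
    exact ((lap_integrable (by positivity) hs).ofReal (𝕜 := ℂ)).const_mul _
  have hval : ∀ k, (∫ t in Set.Ioi (0:ℝ), g k t) = (1/s) ^ (α * k + 1) * Real.Gamma (α * k + 1) :=
    fun k => lap_value (by positivity) hs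
  have hnormval : ∀ k, (∫ t in Set.Ioi (0:ℝ), ‖F k t‖) = ‖c k‖ * (1/s) ^ (α * k + 1) := by
    intro k
    have : ∀ t ∈ Set.Ioi (0:ℝ), ‖F k t‖ = ‖c k‖ / Real.Gamma (α * k + 1) * g k t := by
      intro t ht
      have ht' : (0:ℝ) < t := ht
      rw [hFeq k]
      simp only [norm_mul, norm_div, Complex.norm_real, Real.norm_eq_abs,
        abs_of_pos (hΓpos k), abs_of_nonneg (by positivity : 0 ≤ g k t)]
    rw [setIntegral_congr_fun measurableSet_Ioi this, integral_const_mul, hval k]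
    have := (hΓpos k).ne'
    field_simp
  have hsum : Summable fun k => ∫ t in Set.Ioi (0:ℝ), ‖F k t‖ := by
    have hgeo : Summable fun k : ℕ => (C * (1/s)) * (ρ * (1/s) ^ α) ^ k := by
      apply Summable.mul_left
      apply summable_geometric_of_lt_one (by positivity)
      rw [one_div, Real.inv_rpow hs.le]
      calc ρ * (s ^ α)⁻¹ < s ^ α * (s ^ α)⁻¹ := by
            apply mul_lt_mul_of_pos_right hρs (by positivity)
        _ = 1 := mul_inv_cancel₀ hsα.ne'
    refine Summable.of_nonneg_of_le (fun k => ?_) (fun k => ?_) hgeo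
    · rw [hnormval k]; positivity
    · rw [hnormval k]
      have hp : (1/s) ^ (α * k + 1) = ((1/s) ^ α) ^ k * (1/s) := by
        rw [Real.rpow_add (by positivity), Real.rpow_one, ← Real.rpow_natCast ((1/s)^α) k,
          ← Real.rpow_mul (by positivity)]
      rw [hp]
      calc ‖c k‖ * (((1/s)^α)^k * (1/s)) ≤ (C * ρ ^ k) * (((1/s)^α)^k * (1/s)) := by
            apply mul_le_mul_of_nonneg_right (hc k) (by positivity)
        _ = C * (1/s) * (ρ * (1/s)^α) ^ k := by rw [mul_pow]; ring
    -- compute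
  rw [← MeasureTheory.integral_tsum_of_summable_integral_norm hint hsum]
  congr 1
  funext k
  rw [hFeq k, integral_const_mul]
  rw [show (∫ a in Set.Ioi (0:ℝ), ((g k a : ℝ) : ℂ)) = ((∫ a in Set.Ioi (0:ℝ), g k a : ℝ) : ℂ) from integral_ofReal, hval k]
  push_cast
  have h1 : ((Real.Gamma (α * k + 1) : ℝ) : ℂ) ≠ 0 := Complex.ofReal_ne_zero.mpr (hΓpos k).ne'
  field_simp

lemma ml_summableC {α : ℝ} (hα : 0 < α) (hα1 : α < 1) (x : ℂ) :
    Summable fun k : ℕ => x ^ k / Complex.Gamma ((α * k + 1 : ℝ)) := by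
  apply Summable.of_norm
  refine (ml_summable hα hα1 (norm_nonneg x)).congr fun k => ?_
  rw [norm_div, norm_pow, Complex.Gamma_ofReal, Complex.norm_real, Real.norm_eq_abs,
    abs_of_pos (Real.Gamma_pos_of_pos (by positivity))]


/-- The one-parameter Mittag-Leffler function `E_{α,1}` of a complex argument. -/
noncomputable def mlOneC (α : ℝ) (x : ℂ) : ℂ := ∑' k : ℕ, x ^ k / Complex.Gamma ((α * k + 1 : ℝ))

theorem laplace_transform_fractional_telegraph (α lam m : ℝ) (hα : 0 < α) (hα1 : α < 1)
    (hlam : 0 < lam) (hm : 0 < m) (hne : lam ^ 2 ≠ m) :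
    ∃ s₀ : ℝ, 0 < s₀ ∧ ∀ s : ℝ, s₀ < s →
      (∫ t in Set.Ioi (0:ℝ), Complex.exp (-(s : ℂ) * t) *
          ((1/2) * ((1 + (lam : ℂ) / ((lam ^ 2 - m : ℝ) : ℂ) ^ (1/2 : ℂ)) *
              mlOneC α ((-(lam : ℂ) + ((lam ^ 2 - m : ℝ) : ℂ) ^ (1/2 : ℂ)) * ((t ^ α : ℝ) : ℂ)) +
            (1 - (lam : ℂ) / ((lam ^ 2 - m : ℝ) : ℂ) ^ (1/2 : ℂ)) *
              mlOneC α ((-(lam : ℂ) - ((lam ^ 2 - m : ℝ) : ℂ) ^ (1/2 : ℂ)) * ((t ^ α : ℝ) : ℂ))))) =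
        (((s ^ (2 * α - 1) : ℝ) : ℂ) + 2 * lam * ((s ^ (α - 1) : ℝ) : ℂ)) /
          (((s ^ (2 * α) : ℝ) : ℂ) + 2 * lam * ((s ^ α : ℝ) : ℂ) + m) := by
  set W : ℂ := ((lam ^ 2 - m : ℝ) : ℂ) ^ (1/2 : ℂ) with hW_def
  set L : ℂ := (lam : ℂ) with hL_def
  set r₁ : ℂ := -L + W with hr₁_def
  set r₂ : ℂ := -L - W with hr₂_def
  set c₁ : ℂ := 1 + L / W with hc₁_def
  set c₂ : ℂ := 1 - L / W with hc₂_def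
  have hzne : ((lam ^ 2 - m : ℝ) : ℂ) ≠ 0 := by
    rw [Complex.ofReal_ne_zero]; exact sub_ne_zero.mpr hne
  have hW2 : W ^ 2 = ((lam ^ 2 - m : ℝ) : ℂ) := by
    rw [hW_def, sq, ← Complex.cpow_add _ _ hzne]
    norm_num
  have hWne : W ≠ 0 := by
    intro h
    rw [h] at hW2
    exact hzne (by simpa using hW2.symm)
  set ρ : ℝ := lam + ‖W‖ with hρ_def
  have hρ0 : 0 ≤ ρ := by positivity
  have hr₁ρ : ‖r₁‖ ≤ ρ := by
    calc ‖r₁‖ ≤ ‖-L‖ + ‖W‖ := norm_add_le _ _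
      _ = ρ := by rw [norm_neg, hL_def, Complex.norm_real, Real.norm_eq_abs, abs_of_pos hlam]
  have hr₂ρ : ‖r₂‖ ≤ ρ := by
    calc ‖r₂‖ ≤ ‖-L‖ + ‖W‖ := norm_sub_le _ _
      _ = ρ := by rw [norm_neg, hL_def, Complex.norm_real, Real.norm_eq_abs, abs_of_pos hlam]
  refine ⟨max 1 ((ρ + 1) ^ (1/α)), lt_of_lt_of_le one_pos (le_max_left _ _), fun s hs₀ => ?_⟩
  have hs1 : (1:ℝ) < s := lt_of_le_of_lt (le_max_left _ _) hs₀
  have hs : (0:ℝ) < s := by linarith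
  have hρs : ρ < s ^ α := by
    have h1 : (ρ + 1) ^ (1/α) < s := lt_of_le_of_lt (le_max_right _ _) hs₀
    have h2 : ((ρ + 1) ^ (1/α)) ^ α < s ^ α := Real.rpow_lt_rpow (by positivity) h1 hα
    rw [← Real.rpow_mul (by positivity), one_div, inv_mul_cancel₀ hα.ne', Real.rpow_one] at h2
    linarith
  have hsα : 0 < s ^ α := Real.rpow_pos_of_pos hs α
  set σ : ℝ := s ^ α with hσ_def
  set X : ℂ := (σ : ℂ) with hX_def
  have hXne : X ≠ 0 := Complex.ofReal_ne_zero.mpr hsα.ne'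
  have hXr₁ : X - r₁ ≠ 0 := by
    intro h
    have : ‖r₁‖ = σ := by
      rw [← sub_eq_zero.mp h, hX_def, Complex.norm_real, Real.norm_eq_abs, abs_of_pos hsα]
    linarith [lt_of_le_of_lt hr₁ρ hρs]
  have hXr₂ : X - r₂ ≠ 0 := by
    intro h
    have : ‖r₂‖ = σ := by
      rw [← sub_eq_zero.mp h, hX_def, Complex.norm_real, Real.norm_eq_abs, abs_of_pos hsα]
    linarith [lt_of_le_of_lt hr₂ρ hρs]
  set c : ℕ → ℂ := fun k => (1/2) * (c₁ * r₁ ^ k + c₂ * r₂ ^ k) with hc_def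
  have hc : ∀ k, ‖c k‖ ≤ (‖c₁‖ + ‖c₂‖) * ρ ^ k := by
    intro k
    have b1 : ‖r₁ ^ k‖ ≤ ρ ^ k := by
      rw [norm_pow]; exact pow_le_pow_left₀ (norm_nonneg _) hr₁ρ k
    have b2 : ‖r₂ ^ k‖ ≤ ρ ^ k := by
      rw [norm_pow]; exact pow_le_pow_left₀ (norm_nonneg _) hr₂ρ k
    have hck : c k = 1/2 * (c₁ * r₁ ^ k + c₂ * r₂ ^ k) := rfl
    have key : ‖c₁ * r₁ ^ k + c₂ * r₂ ^ k‖ ≤ ‖c₁‖ * ρ ^ k + ‖c₂‖ * ρ ^ k := by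
      refine (norm_add_le _ _).trans ?_
      rw [norm_mul, norm_mul]
      gcongr
    have hn : ‖c k‖ = 1/2 * ‖c₁ * r₁ ^ k + c₂ * r₂ ^ k‖ := by
      rw [hck, norm_mul]
      norm_num
    rw [hn]
    nlinarith [norm_nonneg c₁, norm_nonneg c₂, pow_nonneg hρ0 k,
      norm_nonneg (c₁ * r₁ ^ k + c₂ * r₂ ^ k)]
  -- Step A : rewrite the integrand as a tsum
  have hA : (∫ t in Set.Ioi (0:ℝ), Complex.exp (-(s : ℂ) * t) *
          ((1/2) * (c₁ * mlOneC α (r₁ * ((t ^ α : ℝ) : ℂ)) +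
            c₂ * mlOneC α (r₂ * ((t ^ α : ℝ) : ℂ)))))
      = ∫ t in Set.Ioi (0:ℝ), ∑' k : ℕ, Complex.exp (-(s:ℂ)*t) *
        (c k * ((t ^ (α * k) : ℝ) : ℂ) / ((Real.Gamma (α * k + 1) : ℝ) : ℂ)) := by
    refine setIntegral_congr_fun measurableSet_Ioi (fun t ht => ?_)
    have ht' : (0:ℝ) < t := ht
    have hterm : ∀ (r : ℂ) (k : ℕ), (r * ((t ^ α : ℝ) : ℂ)) ^ k / Complex.Gamma ((α * k + 1 : ℝ))
        = r ^ k * ((t ^ (α * k) : ℝ) : ℂ) / ((Real.Gamma (α * k + 1) : ℝ) : ℂ) := by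
      intro r k
      rw [mul_pow, Complex.Gamma_ofReal, ← Complex.ofReal_pow, ← Real.rpow_natCast (t ^ α) k,
        ← Real.rpow_mul ht'.le]
    have hS₁ := ml_summableC hα hα1 (r₁ * ((t ^ α : ℝ) : ℂ))
    have hS₂ := ml_summableC hα hα1 (r₂ * ((t ^ α : ℝ) : ℂ))
    rw [mlOneC, mlOneC, ← tsum_mul_left (a := c₁), ← tsum_mul_left (a := c₂),
      ← Summable.tsum_add (hS₁.mul_left c₁) (hS₂.mul_left c₂), ← tsum_mul_left,
      ← tsum_mul_left]
    congr 1
    funext k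
    have hck : c k = 1/2 * (c₁ * r₁ ^ k + c₂ * r₂ ^ k) := rfl
    rw [hterm r₁ k, hterm r₂ k, hck]
    ring
  rw [hA, laplace_ml_gen hα hs c hρ0 hρs hc]
  -- Step C : evaluate the sum and do the final algebra
  have hgeo₁ : Summable fun k : ℕ => (r₁ * X⁻¹) ^ k := by
    apply summable_geometric_of_norm_lt_one
    rw [norm_mul, norm_inv, hX_def, Complex.norm_real, Real.norm_eq_abs, abs_of_pos hsα]
    rw [← div_eq_mul_inv, div_lt_one hsα]
    exact lt_of_le_of_lt hr₁ρ hρs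
  have hgeo₂ : Summable fun k : ℕ => (r₂ * X⁻¹) ^ k := by
    apply summable_geometric_of_norm_lt_one
    rw [norm_mul, norm_inv, hX_def, Complex.norm_real, Real.norm_eq_abs, abs_of_pos hsα]
    rw [← div_eq_mul_inv, div_lt_one hsα]
    exact lt_of_le_of_lt hr₂ρ hρs
  have hterm2 : ∀ k : ℕ, c k * (((1/s) ^ (α * k + 1) : ℝ) : ℂ)
      = ((1/s : ℝ) : ℂ) * ((1/2) * (c₁ * (r₁ * X⁻¹) ^ k + c₂ * (r₂ * X⁻¹) ^ k)) := by
    intro k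
    have hp : (1/s) ^ (α * k + 1) = ((1/s) ^ α) ^ k * (1/s) := by
      rw [Real.rpow_add (by positivity), Real.rpow_one, ← Real.rpow_natCast ((1/s)^α) k,
        ← Real.rpow_mul (by positivity)]
    have hinv : (((1/s) ^ α : ℝ) : ℂ) = X⁻¹ := by
      rw [one_div, Real.inv_rpow hs.le, hX_def, hσ_def, Complex.ofReal_inv]
    have hck : c k = 1/2 * (c₁ * r₁ ^ k + c₂ * r₂ ^ k) := rfl
    rw [hp, Complex.ofReal_mul, Complex.ofReal_pow, hinv, hck, mul_pow, mul_pow]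
    ring
  rw [tsum_congr hterm2, tsum_mul_left, tsum_mul_left,
    Summable.tsum_add (hgeo₁.mul_left c₁) (hgeo₂.mul_left c₂),
    tsum_mul_left, tsum_mul_left, tsum_geometric_of_norm_lt_one (by
      have := hgeo₁; rw [summable_geometric_iff_norm_lt_one] at this; exact this),
    tsum_geometric_of_norm_lt_one (by
      have := hgeo₂; rw [summable_geometric_iff_norm_lt_one] at this; exact this)]
  -- final algebra
  have e₁ : (1 - r₁ * X⁻¹)⁻¹ = X * (X - r₁)⁻¹ := by
    rw [show (1 : ℂ) - r₁ * X⁻¹ = (X - r₁) * X⁻¹ by field_simp, mul_inv, inv_inv, mul_comm]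
  have e₂ : (1 - r₂ * X⁻¹)⁻¹ = X * (X - r₂)⁻¹ := by
    rw [show (1 : ℂ) - r₂ * X⁻¹ = (X - r₂) * X⁻¹ by field_simp, mul_inv, inv_inv, mul_comm]
  have hs2α : ((s ^ (2*α) : ℝ) : ℂ) = X ^ 2 := by
    rw [hX_def, hσ_def, show (2*α) = α*2 by ring, Real.rpow_mul hs.le]
    push_cast [Real.rpow_two]
    ring
  have hsd1 : ((s ^ (2*α-1) : ℝ) : ℂ) = X ^ 2 * ((s:ℂ))⁻¹ := by
    rw [Real.rpow_sub hs, Real.rpow_one, Complex.ofReal_div, hs2α, div_eq_mul_inv]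
  have hsd2 : ((s ^ (α-1) : ℝ) : ℂ) = X * ((s:ℂ))⁻¹ := by
    rw [Real.rpow_sub hs, Real.rpow_one, Complex.ofReal_div, div_eq_mul_inv, ← hσ_def, ← hX_def]
  have hD : ((s ^ (2*α) : ℝ) : ℂ) + 2 * lam * ((s ^ α : ℝ) : ℂ) + m = (X - r₁) * (X - r₂) := by
    rw [hs2α, ← hσ_def, ← hX_def, hr₁_def, hr₂_def, hL_def]
    have hM : ((m:ℝ):ℂ) = L^2 - W^2 := by
      rw [hW2, hL_def]; push_cast; ring
    rw [hL_def] at hM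
    linear_combination hM
  have hsne : ((s:ℝ):ℂ) ≠ 0 := Complex.ofReal_ne_zero.mpr hs.ne'
  rw [hD, hsd1, hsd2, e₁, e₂]
  rw [hr₁_def] at hXr₁
  rw [hr₂_def] at hXr₂
  rw [hr₁_def, hr₂_def]
  rw [hc₁_def, hc₂_def]
  have h1 : (1 + L/W) * (X * (X - (-L+W))⁻¹) = ((W+L)*X) / (W*(X - (-L+W))) := by
    field_simp
  have h2 : (1 - L/W) * (X * (X - (-L-W))⁻¹) = ((W-L)*X) / (W*(X - (-L-W))) := by
    field_simp
  rw [h1, h2, div_add_div _ _ (mul_ne_zero hWne hXr₁) (mul_ne_zero hWne hXr₂),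
    ← mul_div_assoc, ← mul_div_assoc, one_div s, Complex.ofReal_inv,
    div_eq_div_iff (mul_ne_zero (mul_ne_zero hWne hXr₁) (mul_ne_zero hWne hXr₂))
      (mul_ne_zero hXr₁ hXr₂)]
  ring
end
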